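/- Let f be a gamma-type density with parameters α ∈ ℝ, β > 0 and slowly varying positive C, and let F̄ be its survival function. Then the hazard ratio f(x)/F̄(x) converges to β as x → ∞. -/

import Mathlib

/-!
Write `f x = D x * x ^ α * exp (-β * x)`. Then `D` is asymptotic to `C`, hence slowly varying,
and it is a.e. measurable because `f` is. Karamata's uniform convergence theorem, which needs this
measurability, makes `log D (x + s) - log D x` small uniformly in `s ∈ [0, 1]`,
so `h = log f + β ·` has uniformly small unit increments `≤ η`. Chaining them sandwiches `f t / f x`
between `e^{-η} e^{-(β + η)(t - x)}` and `e^{η} e^{-(β - η)(t - x)}` for `t ≥ x`, and integrating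
over `(x, ∞)` traps `F̄ x / f x` between `e^{-η} / (β + η)` and `e^{η} / (β - η)`.
-/

open Filter Real MeasureTheory Set Topology

def IsSlowlyVarying (L : ℝ → ℝ) : Prop :=
  ∀ l : ℝ, 0 < l → Tendsto (fun t => L (t * l) / L t) atTop (𝓝 1)

namespace IsSlowlyVarying

variable {L M : ℝ → ℝ}

lemma eventually_ne_zero (hL : IsSlowlyVarying L) : ∀ᶠ x in atTop, L x ≠ 0 :=
  ((hL 1 one_pos).eventually_ne one_ne_zero).mono fun _ hx h => hx (by simp [h])

lemma of_tendsto_div (hL : IsSlowlyVarying L) (hML : Tendsto (fun x => M x / L x) atTop (𝓝 1)) :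
    IsSlowlyVarying M := by
  intro l hl
  have h := ((hML.comp (tendsto_id.atTop_mul_const hl)).mul (hL l hl)).div hML one_ne_zero
  rw [mul_one, div_one] at h
  refine h.congr' ?_
  filter_upwards [(hL l hl).eventually_ne one_ne_zero] with x hx
  obtain ⟨hxl, hx⟩ := div_ne_zero_iff.1 hx
  rcases eq_or_ne (M x) 0 with hM | hM
  · simp [hM]
  · simp only [Pi.div_apply, Function.comp_apply, id]
    field_simp

lemma tendsto_log_comp_mul_sub (hL : IsSlowlyVarying L) {l : ℝ} (hl : 0 < l) :
    Tendsto (fun x => log (L (x * l)) - log (L x)) atTop (𝓝 0) := by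
  have h := (continuousAt_log one_ne_zero).tendsto.comp (hL l hl)
  rw [log_one] at h
  refine h.congr' ?_
  filter_upwards [(hL l hl).eventually_ne one_ne_zero] with x hx
  obtain ⟨hxl, hx⟩ := div_ne_zero_iff.1 hx
  exact log_div hxl hx

end IsSlowlyVarying

lemma aestronglyMeasurable_comp_const_mul {H : ℝ → ℝ} (hH : AEStronglyMeasurable H) (c : ℝ) :
    AEStronglyMeasurable (fun u => H (c * u)) := by
  rcases eq_or_ne c 0 with rfl | hc
  · simpa using aestronglyMeasurable_const
  · exact hH.comp_quasiMeasurePreserving (Measure.quasiMeasurePreserving_smul volume hc)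

lemma tendsto_volume_setOf_le_abs_inter {S : Set ℝ} (hS : MeasurableSet S) (hSfin : volume S ≠ ⊤)
    {F : ℕ → ℝ → ℝ} (hF : ∀ n, AEStronglyMeasurable (F n))
    (hlim : ∀ u ∈ S, Tendsto (fun n => F n u) atTop (𝓝 0)) {η : ℝ} (hη : 0 < η) :
    Tendsto (fun n => volume ({u | η ≤ |F n u|} ∩ S)) atTop (𝓝 0) := by
  have : IsFiniteMeasure (volume.restrict S) := ⟨by simpa [hS] using hSfin.lt_top⟩
  have := tendstoInMeasure_of_tendsto_ae (μ := volume.restrict S) (g := 0)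
    (fun n => (hF n).restrict) ((ae_restrict_iff' hS).2 (ae_of_all _ hlim))
    (ENNReal.ofReal η) (by simpa using hη)
  simpa [Measure.restrict_apply' hS, edist_dist, ENNReal.ofReal_le_ofReal_iff (abs_nonneg _)]
    using this

lemma exists_mem_Icc_notMem_of_volume_lt {A B : Set ℝ} {l : ℝ} (hl : 0 < l)
    (hA : volume A < ENNReal.ofReal (l / 2)) (hB : volume B < ENNReal.ofReal (1 / 2)) :
    ∃ v ∈ Icc l (2 * l), v ∉ A ∧ v / l ∉ B := by
  have hB' : volume ((· / l) ⁻¹' B) < ENNReal.ofReal (l / 2) := by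
    simp only [div_eq_mul_inv]
    rw [Real.volume_preimage_mul_right (inv_ne_zero hl.ne'), inv_inv, abs_of_pos hl,
      ENNReal.ofReal_mul hl.le]
    exact ENNReal.mul_lt_mul_right (by simpa using hl) ENNReal.ofReal_ne_top (by simpa using hB)
  have hlt : volume (A ∪ (· / l) ⁻¹' B) < volume (Icc l (2 * l)) := by
    calc volume (A ∪ (· / l) ⁻¹' B) ≤ volume A + volume ((· / l) ⁻¹' B) := measure_union_le _ _
      _ < ENNReal.ofReal (l / 2) + ENNReal.ofReal (l / 2) := ENNReal.add_lt_add hA hB'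
      _ = volume (Icc l (2 * l)) := by
        rw [Real.volume_Icc, ← ENNReal.ofReal_add (by positivity) (by positivity)]
        ring_nf
  obtain ⟨v, hv, hvAB⟩ := Set.not_subset.1 fun h => (measure_mono h).not_gt hlt
  exact ⟨v, hv, fun h => hvAB (Or.inl h), fun h => hvAB (Or.inr h)⟩

theorem tendsto_comp_mul_sub_atTop_prod_Icc {H : ℝ → ℝ} (hH : AEStronglyMeasurable H)
    (hsv : ∀ l, 0 < l → Tendsto (fun x => H (x * l) - H x) atTop (𝓝 0)) {a b : ℝ} (ha : 0 < a) :
    Tendsto (fun p : ℝ × ℝ => H (p.1 * p.2) - H p.1) (atTop ×ˢ 𝓟 (Icc a b)) (𝓝 0) := by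
  refine tendsto_iff_seq_tendsto.2 fun p hp => ?_
  obtain ⟨hx, hl⟩ := tendsto_prod_iff'.1 hp
  set x := fun n => (p n).1
  set l := fun n => (p n).2
  have hlab : ∀ᶠ n in atTop, l n ∈ Icc a b := tendsto_principal.1 hl
  have hy : Tendsto (fun n => x n * l n) atTop atTop := by
    refine tendsto_atTop_mono' _ ?_ (hx.atTop_mul_const ha)
    filter_upwards [hlab, hx.eventually_ge_atTop 0] with n hn hxn
    exact mul_le_mul_of_nonneg_left hn.1 hxn
  have hsmall : ∀ (z : ℕ → ℝ), Tendsto z atTop atTop → ∀ {S : Set ℝ}, S ⊆ Ioi 0 →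
      MeasurableSet S → volume S ≠ ⊤ → ∀ η > 0,
      Tendsto (fun n => volume ({u | η ≤ |H (z n * u) - H (z n)|} ∩ S)) atTop (𝓝 0) :=
    fun z hz S hS0 hS hSfin η hη => tendsto_volume_setOf_le_abs_inter hS hSfin
      (fun n => (aestronglyMeasurable_comp_const_mul hH _).sub aestronglyMeasurable_const)
      (fun u hu => (hsv u (hS0 hu)).comp hz) hη
  rw [Metric.tendsto_nhds]
  intro ε hε
  filter_upwards [hlab,
    (hsmall x hx (S := Icc a (2 * b)) (fun u hu => ha.trans_le hu.1) measurableSet_Icc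
      (by simp) (ε / 2) (by positivity)).eventually_lt_const
      (ENNReal.ofReal_pos.2 (half_pos ha)),
    (hsmall _ hy (S := Icc 1 2) (fun u hu => one_pos.trans_le hu.1) measurableSet_Icc
      (by simp) (ε / 2) (by positivity)).eventually_lt_const
      (ENNReal.ofReal_pos.2 one_half_pos)] with n hn hA hB
  have hl0 : 0 < l n := ha.trans_le hn.1
  -- Both exceptional sets are small, so some `v` is good for `x n` and `v / l n` for `x n * l n`.
  obtain ⟨v, hv, hvA, hvB⟩ :=
    exists_mem_Icc_notMem_of_volume_lt hl0 (hA.trans_le (by gcongr; exact hn.1)) hB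
  have hv₁ : |H (x n * v) - H (x n)| < ε / 2 :=
    not_le.1 fun h => hvA ⟨h, hn.1.trans hv.1, by linarith [hv.2, hn.2]⟩
  have hv₂ : |H (x n * l n * (v / l n)) - H (x n * l n)| < ε / 2 :=
    not_le.1 fun h => hvB ⟨h, by rw [le_div_iff₀ hl0]; linarith [hv.1],
      by rw [div_le_iff₀ hl0]; linarith [hv.2]⟩
  rw [mul_assoc, mul_div_cancel₀ _ hl0.ne'] at hv₂
  rw [Real.dist_eq, sub_zero]
  calc |H (x n * l n) - H (x n)|
      = |(H (x n * v) - H (x n)) - (H (x n * v) - H (x n * l n))| := by ring_nf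
    _ ≤ |H (x n * v) - H (x n)| + |H (x n * v) - H (x n * l n)| := abs_sub _ _
    _ < ε := by linarith

lemma tendsto_comp_add_sub_of_comp_mul_sub {H : ℝ → ℝ}
    (hH : Tendsto (fun p : ℝ × ℝ => H (p.1 * p.2) - H p.1) (atTop ×ˢ 𝓟 (Icc 1 2)) (𝓝 0)) :
    Tendsto (fun p : ℝ × ℝ => H (p.1 + p.2) - H p.1) (atTop ×ˢ 𝓟 (Icc 0 1)) (𝓝 0) := by
  have hmem : ∀ᶠ p : ℝ × ℝ in atTop ×ˢ 𝓟 (Icc 0 1), 1 ≤ p.1 ∧ p.2 ∈ Icc (0 : ℝ) 1 :=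
    prod_mem_prod (Ici_mem_atTop 1) (mem_principal_self _)
  have hφ : Tendsto (fun p : ℝ × ℝ => (p.1, 1 + p.2 / p.1)) (atTop ×ˢ 𝓟 (Icc 0 1))
      (atTop ×ˢ 𝓟 (Icc 1 2)) := by
    refine tendsto_fst.prodMk (tendsto_principal.2 ?_)
    filter_upwards [hmem] with p ⟨hp1, hp2⟩
    have hp0 : (0 : ℝ) < p.1 := one_pos.trans_le hp1
    exact ⟨by linarith [div_nonneg hp2.1 hp0.le],
      by linarith [(div_le_one hp0).2 (hp2.2.trans hp1)]⟩
  refine (hH.comp hφ).congr' ?_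
  filter_upwards [hmem] with p hp
  simp only [Function.comp_apply]
  rw [mul_add, mul_one, mul_div_cancel₀ _ (one_pos.trans_le hp.1).ne']

lemma tendsto_log_add_sub_log_atTop_prod_Icc :
    Tendsto (fun p : ℝ × ℝ => log (p.1 + p.2) - log p.1) (atTop ×ˢ 𝓟 (Icc 0 1)) (𝓝 0) := by
  have hmem : ∀ᶠ p : ℝ × ℝ in atTop ×ˢ 𝓟 (Icc 0 1), 0 < p.1 ∧ p.2 ∈ Icc (0 : ℝ) 1 :=
    prod_mem_prod (Ioi_mem_atTop 0) (mem_principal_self _)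
  have hdiv : Tendsto (fun p : ℝ × ℝ => p.2 / p.1) (atTop ×ˢ 𝓟 (Icc 0 1)) (𝓝 0) := by
    refine tendsto_of_tendsto_of_tendsto_of_le_of_le' tendsto_const_nhds
      (tendsto_inv_atTop_zero.comp tendsto_fst) ?_ ?_ <;>
      filter_upwards [hmem] with p ⟨hp0, hp⟩
    · exact div_nonneg hp.1 hp0.le
    · simpa [div_eq_mul_inv] using mul_le_of_le_one_left (inv_nonneg.2 hp0.le) hp.2
  have h1 : Tendsto (fun p : ℝ × ℝ => 1 + p.2 / p.1) (atTop ×ˢ 𝓟 (Icc 0 1)) (𝓝 1) := by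
    simpa using (tendsto_const_nhds (x := (1 : ℝ))).add hdiv
  have h := (continuousAt_log one_ne_zero).tendsto.comp h1
  rw [log_one] at h
  refine h.congr' ?_
  filter_upwards [hmem] with p ⟨hp0, hp⟩
  simp only [Function.comp_apply]
  rw [← log_div (by linarith [hp.1]) hp0.ne', add_div, div_self hp0.ne']

lemma abs_sub_le_of_abs_increment_le {h : ℝ → ℝ} {X η : ℝ}
    (hinc : ∀ x ≥ X, ∀ s ∈ Icc (0 : ℝ) 1, |h (x + s) - h x| ≤ η) {x t : ℝ} (hx : X ≤ x)
    (hxt : x ≤ t) : |h t - h x| ≤ η * (t - x + 1) := by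
  have hη : 0 ≤ η := by simpa using hinc x hx 0 (by simp)
  have key : ∀ n : ℕ, ∀ t, x ≤ t → t ≤ x + n → |h t - h x| ≤ η * n := by
    intro n
    induction n with
    | zero =>
      intro t h₁ h₂
      simp [le_antisymm (by simpa using h₂) h₁]
    | succ n ih =>
      intro t h₁ h₂
      push_cast at h₂ ⊢
      rcases le_total t (x + n) with ht | ht
      · exact (ih t h₁ ht).trans (by nlinarith)
      · have step := hinc (x + n) (by linarith [n.cast_nonneg (α := ℝ)]) (t - (x + n))
          ⟨by linarith, by linarith⟩
        rw [add_sub_cancel] at step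
        calc |h t - h x| ≤ |h t - h (x + n)| + |h (x + n) - h x| := abs_sub_le _ _ _
          _ ≤ η + η * n := add_le_add step (ih _ (by linarith [n.cast_nonneg (α := ℝ)]) le_rfl)
          _ = η * (n + 1) := by ring
  calc |h t - h x| ≤ η * ⌈t - x⌉₊ := key _ t hxt (by linarith [Nat.le_ceil (t - x)])
    _ ≤ η * (t - x + 1) := by
      gcongr
      exact (Nat.ceil_lt_add_one (by linarith)).le

lemma exp_neg_mul_sub (c x t : ℝ) : exp (-c * (t - x)) = exp (c * x) * exp (-c * t) := by
  rw [← exp_add]; ring_nf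

lemma integrableOn_exp_neg_mul_sub_Ioi {c : ℝ} (hc : 0 < c) (x : ℝ) :
    IntegrableOn (fun t => exp (-c * (t - x))) (Ioi x) := by
  simp only [exp_neg_mul_sub c x]
  exact (exp_neg_integrableOn_Ioi x hc).const_mul _

lemma integral_exp_neg_mul_sub_Ioi {c : ℝ} (hc : 0 < c) (x : ℝ) :
    ∫ t in Ioi x, exp (-c * (t - x)) = c⁻¹ := by
  simp only [exp_neg_mul_sub c x]
  rw [integral_const_mul, integral_exp_mul_Ioi (neg_lt_zero.2 hc), neg_div_neg_eq,
    mul_div_assoc', ← exp_add, neg_mul, add_neg_cancel, exp_zero, one_div]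

lemma integral_Ioi_div_mem_Icc_of_abs_increment_le {g h : ℝ → ℝ} {β η X : ℝ} (hg : Integrable g)
    (hηβ : η < β) (hgh : ∀ x ≥ X, g x = exp (h x - β * x))
    (hinc : ∀ x ≥ X, ∀ s ∈ Icc (0 : ℝ) 1, |h (x + s) - h x| ≤ η) {x : ℝ} (hx : X ≤ x) :
    (∫ t in Ioi x, g t) / g x ∈ Icc (exp (-η) / (β + η)) (exp η / (β - η)) := by
  have hη : 0 ≤ η := by simpa using hinc x hx 0 (by simp)
  have hgx : 0 < g x := by rw [hgh x hx]; exact exp_pos _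
  have hbounds : ∀ t ∈ Ioi x, g x * exp (-η) * exp (-(β + η) * (t - x)) ≤ g t ∧
      g t ≤ g x * exp η * exp (-(β - η) * (t - x)) := by
    intro t ht
    have hgt : g t = g x * exp ((h t - h x) - β * (t - x)) := by
      rw [hgh t (hx.trans ht.le), hgh x hx, ← exp_add]; ring_nf
    have hht := abs_le.1 (abs_sub_le_of_abs_increment_le hinc hx ht.le)
    rw [hgt, mul_assoc, mul_assoc, ← exp_add, ← exp_add]
    constructor <;> gcongr <;> nlinarith
  have hlo := setIntegral_mono_on ((integrableOn_exp_neg_mul_sub_Ioi (by linarith) x).const_mul _)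
    hg.integrableOn measurableSet_Ioi fun t ht => (hbounds t ht).1
  have hhi := setIntegral_mono_on hg.integrableOn
    ((integrableOn_exp_neg_mul_sub_Ioi (by linarith) x).const_mul _) measurableSet_Ioi
    fun t ht => (hbounds t ht).2
  rw [integral_const_mul, integral_exp_neg_mul_sub_Ioi (by linarith)] at hlo hhi
  constructor
  · rw [le_div_iff₀ hgx]; convert hlo using 1; ring
  · rw [div_le_iff₀ hgx]; convert hhi using 1; ring

lemma tendsto_of_forall_eventually_mem_Icc {α ι : Type*} {l : Filter α} {p : Filter ι} [p.NeBot]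
    {Q : α → ℝ} {lo hi : ι → ℝ} {c : ℝ} (hlo : Tendsto lo p (𝓝 c)) (hhi : Tendsto hi p (𝓝 c))
    (h : ∀ᶠ i in p, ∀ᶠ x in l, Q x ∈ Icc (lo i) (hi i)) : Tendsto Q l (𝓝 c) := by
  refine tendsto_order.2 ⟨fun a ha => ?_, fun b hb => ?_⟩
  · obtain ⟨i, hi, hai⟩ := (h.and (hlo.eventually (lt_mem_nhds ha))).exists
    exact hi.mono fun x hx => hai.trans_le hx.1
  · obtain ⟨i, hi, hib⟩ := (h.and (hhi.eventually (gt_mem_nhds hb))).exists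
    exact hi.mono fun x hx => hx.2.trans_lt hib

theorem tendsto_div_integral_Ioi_of_eventually_eq_exp {g h : ℝ → ℝ} {β : ℝ} (hβ : 0 < β)
    (hg : Integrable g) (hgh : ∀ᶠ x in atTop, g x = exp (h x - β * x))
    (hinc : Tendsto (fun p : ℝ × ℝ => h (p.1 + p.2) - h p.1) (atTop ×ˢ 𝓟 (Icc 0 1)) (𝓝 0)) :
    Tendsto (fun x => g x / ∫ t in Ioi x, g t) atTop (𝓝 β) := by
  suffices Tendsto (fun x => (∫ t in Ioi x, g t) / g x) atTop (𝓝 β⁻¹) by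
    simpa using this.inv₀ (inv_ne_zero hβ.ne')
  have hcont : ∀ σ : ℝ, Tendsto (fun η => exp (σ * η) / (β - σ * η)) (𝓝[>] 0) (𝓝 β⁻¹) := by
    intro σ
    have : ContinuousAt (fun η => exp (σ * η) / (β - σ * η)) 0 := by
      fun_prop (disch := simpa using hβ.ne')
    have h := this.tendsto.mono_left (nhdsWithin_le_nhds (s := Ioi 0))
    rwa [mul_zero, exp_zero, sub_zero, ← inv_eq_one_div] at h
  refine tendsto_of_forall_eventually_mem_Icc (by simpa using hcont (-1)) (by simpa using hcont 1) ?_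
  filter_upwards [Ioo_mem_nhdsGT hβ] with η hη
  have hsmall := eventually_prod_principal_iff.1
    (hinc.eventually (Icc_mem_nhds (neg_lt_zero.2 hη.1) hη.1))
  obtain ⟨X, hX⟩ := eventually_atTop.1 (hgh.and hsmall)
  filter_upwards [eventually_ge_atTop X] with x hx
  exact integral_Ioi_div_mem_Icc_of_abs_increment_le hg hη.2 (fun x hx => (hX x hx).1)
    (fun x hx s hs => abs_le.2 ((hX x hx).2 s hs)) hx

theorem gammaType_hazard_tendsto_general
    (f C : ℝ → ℝ) (α β : ℝ) (hβ : 0 < β)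
    (hf_nonneg : ∀ x, 0 ≤ f x)
    (hf_int : Integrable f)
    (hC_SV : ∀ x : ℝ, 0 < x → Tendsto (fun t => C (t * x) / C t) atTop (nhds 1))
    (hGamma : Tendsto (fun x => f x / (C x * x ^ α * Real.exp (-β * x))) atTop (nhds 1)) :
    Tendsto (fun x => f x / ∫ t in Set.Ioi x, f t) atTop (nhds β) := by
  set D : ℝ → ℝ := fun x => f x / (x ^ α * exp (-β * x))
  have hD : IsSlowlyVarying D :=
    IsSlowlyVarying.of_tendsto_div hC_SV (hGamma.congr fun x => by simp only [D, div_div]; ring_nf)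
  have hDpos : ∀ᶠ x in atTop, 0 < D x := by
    filter_upwards [hD.eventually_ne_zero, eventually_gt_atTop 0] with x hDx hx
    exact (div_nonneg (hf_nonneg x) (by positivity)).lt_of_ne' hDx
  have hlogD_meas : AEStronglyMeasurable fun x => log (D x) := by
    have := hf_int.aemeasurable
    exact (by fun_prop : AEMeasurable fun x => log (D x)).aestronglyMeasurable
  refine tendsto_div_integral_Ioi_of_eventually_eq_exp (h := fun x => log (D x) + α * log x) hβ
    hf_int ?_ ?_
  · filter_upwards [hDpos, eventually_gt_atTop 0] with x hDx hx
    rw [add_sub_assoc, exp_add, exp_log hDx, mul_comm α, sub_eq_add_neg, exp_add,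
      ← rpow_def_of_pos hx, ← neg_mul, div_mul_cancel₀ _ (by positivity)]
  · have hinc := (tendsto_comp_add_sub_of_comp_mul_sub (H := fun x => log (D x))
      (tendsto_comp_mul_sub_atTop_prod_Icc hlogD_meas
      (fun l hl => hD.tendsto_log_comp_mul_sub hl) one_pos)).add
      (tendsto_log_add_sub_log_atTop_prod_Icc.const_mul α)
    simpa [add_sub_add_comm, mul_sub] using hinc

/-- The hazard ratio of a gamma-type density converges to `β`. -/
theorem gammaType_hazard_tendsto
    (f C : ℝ → ℝ) (α β : ℝ) (hβ : 0 < β)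
    (hf_nonneg : ∀ x, 0 ≤ f x)
    (hf_supp : ∀ x < 0, f x = 0)
    (hf_int : Integrable f)
    (hf_prob : ∫ x, f x = 1)
    (hC_pos : ∀ x, 0 < C x)
    (hC_locbdd : ∀ r : ℝ, ∃ M : ℝ, ∀ x ∈ Set.Icc (0:ℝ) r, |C x| ≤ M)
    (hC_SV : ∀ x : ℝ, 0 < x → Tendsto (fun t => C (t * x) / C t) atTop (nhds 1))
    (hGamma : Tendsto (fun x => f x / (C x * x ^ α * Real.exp (-β * x))) atTop (nhds 1)) :
    Tendsto (fun x => f x / ∫ t in Set.Ioi x, f t) atTop (nhds β) :=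
  gammaType_hazard_tendsto_general f C α β hβ hf_nonneg hf_int hC_SV hGamma
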